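/- arXiv:2408.07792 — 7 statements merged into one kernel-verified Lean document; each statement's English description precedes it below -/
import Mathlib

section
/- Let (u,v) and (u′,v′) be nonzero pairs in ℂ², and let q = u + v·j and q′ = u′ + v′·j be the corresponding quaternions. Then q⁻¹ · i · q = q′⁻¹ · i · q′ if and only if there exists a nonzero complex number λ with (u′,v′) = (λu, λv). In other words, the Hopf map (u,v) ↦ (u+vj)⁻¹ i (u+vj) has fibers exactly the complex lines through the origin in ℂ² − {0}. -/
/-!
`q⁻¹ i q = q'⁻¹ i q'` says exactly that `q' q⁻¹` commutes with `i`, and the centralizer of `i`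
in `ℍ` is the copy `ℝ + ℝ i` of `ℂ`. So the fibres of the Hopf map are the orbits `q ↦ λ q`,
`λ ∈ ℂˣ`, and left multiplication by `λ` sends `u + v j` to `λu + (λv) j`.
-/

/-- The quaternion `u + v·j` attached to a pair `(u,v) ∈ ℂ²`, with components
`(Re u, Im u, Re v, Im v)` in the basis `(1, i, j, k)`. -/
def toQuat (u v : ℂ) : Quaternion ℝ := ⟨u.re, u.im, v.re, v.im⟩

/-- The quaternion `i`, with components `(0,1,0,0)`. -/
def qi : Quaternion ℝ := ⟨0, 1, 0, 0⟩

theorem inv_mul_mul_eq_inv_mul_mul_iff_commute {G₀ : Type*} [GroupWithZero G₀] {x q q' : G₀}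
    (hq : q ≠ 0) (hq' : q' ≠ 0) :
    q⁻¹ * x * q = q'⁻¹ * x * q' ↔ Commute x (q' * q⁻¹) := by
  rw [eq_comm, mul_assoc, inv_mul_eq_iff_eq_mul₀ hq', ← mul_assoc, ← mul_assoc,
    ← mul_inv_eq_iff_eq_mul₀ hq, Commute, SemiconjBy, mul_assoc, mul_assoc, eq_comm]

@[simp] theorem toQuat_re (u v : ℂ) : (toQuat u v).re = u.re := rfl
@[simp] theorem toQuat_imI (u v : ℂ) : (toQuat u v).imI = u.im := rfl
@[simp] theorem toQuat_imJ (u v : ℂ) : (toQuat u v).imJ = v.re := rfl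
@[simp] theorem toQuat_imK (u v : ℂ) : (toQuat u v).imK = v.im := rfl

@[simp] theorem qi_re : qi.re = 0 := rfl
@[simp] theorem qi_imI : qi.imI = 1 := rfl
@[simp] theorem qi_imJ : qi.imJ = 0 := rfl
@[simp] theorem qi_imK : qi.imK = 0 := rfl

theorem toQuat_inj {u v u' v' : ℂ} : toQuat u v = toQuat u' v' ↔ u = u' ∧ v = v' := by
  simp [Quaternion.ext_iff, Complex.ext_iff, and_assoc]

theorem toQuat_eq_zero {u v : ℂ} : toQuat u v = 0 ↔ u = 0 ∧ v = 0 :=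
  toQuat_inj (u' := 0) (v' := 0)

theorem toQuat_mul_toQuat (a u v : ℂ) : toQuat a 0 * toQuat u v = toQuat (a * u) (a * v) := by
  ext <;> simp

theorem commute_qi_iff {w : Quaternion ℝ} : Commute qi w ↔ ∃ a : ℂ, toQuat a 0 = w := by
  constructor
  · intro hw
    have hJ := congrArg QuaternionAlgebra.imJ hw
    have hK := congrArg QuaternionAlgebra.imK hw
    simp only [Quaternion.imJ_mul, Quaternion.imK_mul, qi_re, qi_imI, qi_imJ, qi_imK] at hJ hK
    exact ⟨⟨w.re, w.imI⟩, by ext <;> simp <;> linarith⟩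
  · rintro ⟨a, rfl⟩
    ext <;> simp

/-- for nonzero pairs `(u,v), (u′,v′) ∈ ℂ²` with associated quaternions
`q = u+v·j`, `q′ = u′+v′·j`, one has `q⁻¹·i·q = q′⁻¹·i·q′` iff `(u′,v′) = (λu, λv)`
for some nonzero complex `λ`: the Hopf map has fibers the complex lines through `0`. -/
theorem stmt5 (u v u' v' : ℂ) (h : (u, v) ≠ (0, 0)) (h' : (u', v') ≠ (0, 0)) :
    (toQuat u v)⁻¹ * qi * toQuat u v = (toQuat u' v')⁻¹ * qi * toQuat u' v' ↔
      ∃ lam : ℂ, lam ≠ 0 ∧ u' = lam * u ∧ v' = lam * v := by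
  have hq : toQuat u v ≠ 0 := by simpa [toQuat_eq_zero] using h
  have hq' : toQuat u' v' ≠ 0 := by simpa [toQuat_eq_zero] using h'
  rw [inv_mul_mul_eq_inv_mul_mul_iff_commute hq hq', commute_qi_iff]
  constructor
  · rintro ⟨a, ha⟩
    have hline : u' = a * u ∧ v' = a * v := by
      rw [← toQuat_inj, ← toQuat_mul_toQuat, ha, inv_mul_cancel_right₀ hq]
    refine ⟨a, ?_, hline⟩
    rintro rfl
    simp_all
  · rintro ⟨a, -, rfl, rfl⟩
    exact ⟨a, by rw [← toQuat_mul_toQuat, mul_inv_cancel_right₀ hq]⟩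
end

section
/- Let (u,v) ∈ ℂ² be nonzero, let q = u + v·j be the corresponding quaternion, and set N = |u|² + |v|². Then q⁻¹ · i · q is the quaternion with components (0, (|u|²−|v|²)/N, −2·Im(conj(u)·v)/N, 2·Re(conj(u)·v)/N), i.e. q⁻¹ i q = ((|u|²−|v|²)·i − 2 Im(ūv)·j + 2 Re(ūv)·k) / (|u|²+|v|²). -/
/-- The quaternion with components `(r, x, y, z)` in the basis `(1, i, j, k)`. -/
def mkQ (r x y z : ℝ) : Quaternion ℝ := ⟨r, x, y, z⟩

/- Conjugating `i` by `q` is, up to the scalar `1 / ‖q‖²`, the polynomial map `q ↦ q̄ i q`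
(Hopf map), since `q⁻¹ = ‖q‖⁻² q̄`. Expanding `q̄ i q` for `q = u + v j` gives the
components `(0, |u|² − |v|², −2 Im(ūv), 2 Re(ūv))`. -/

lemma normSq_toQuat (u v : ℂ) :
    Quaternion.normSq (toQuat u v) = Complex.normSq u + Complex.normSq v := by
  rw [Quaternion.normSq_def', Complex.normSq_apply, Complex.normSq_apply]
  simp only [toQuat]
  ring

lemma star_toQuat_mul_qi_mul_toQuat (u v : ℂ) :
    star (toQuat u v) * qi * toQuat u v =
      mkQ 0 (Complex.normSq u - Complex.normSq v) (-(2 * (star u * v).im))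
        (2 * (star u * v).re) := by
  ext <;>
    simp only [Quaternion.re_mul, Quaternion.imI_mul, Quaternion.imJ_mul, Quaternion.imK_mul,
      Quaternion.re_star, Quaternion.imI_star, Quaternion.imJ_star, Quaternion.imK_star] <;>
    simp [toQuat, qi, mkQ, Complex.normSq_apply] <;>
    ring

lemma smul_mkQ (c r x y z : ℝ) : c • mkQ r x y z = mkQ (c * r) (c * x) (c * y) (c * z) := rfl

theorem stmt6_general (u v : ℂ) (N : ℝ)
    (hN : N = Complex.normSq u + Complex.normSq v) :
    (toQuat u v)⁻¹ * qi * toQuat u v =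
      mkQ 0 ((Complex.normSq u - Complex.normSq v) / N)
        (-(2 * (star u * v).im) / N) (2 * (star u * v).re / N) := by
  rw [Quaternion.inv_def, normSq_toQuat, ← hN, smul_mul_assoc, smul_mul_assoc,
    star_toQuat_mul_qi_mul_toQuat, smul_mkQ]
  simp only [mul_zero, div_eq_inv_mul]

/-- for nonzero `(u,v) ∈ ℂ²`, `q = u+v·j` and `N = |u|²+|v|²`, the
conjugate `q⁻¹·i·q` has components `(0, (|u|²−|v|²)/N, −2 Im(ūv)/N, 2 Re(ūv)/N)`. -/
theorem stmt6 (u v : ℂ) (h : (u, v) ≠ (0, 0)) (N : ℝ)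
    (hN : N = Complex.normSq u + Complex.normSq v) :
    (toQuat u v)⁻¹ * qi * toQuat u v =
      mkQ 0 ((Complex.normSq u - Complex.normSq v) / N)
        (-(2 * (star u * v).im) / N) (2 * (star u * v).re / N) :=
  stmt6_general u v N hN
end

section
/- Every pure imaginary real quaternion of norm 1 is of the form q⁻¹ · i · q for some nonzero quaternion q; i.e. the Hopf map q ↦ q⁻¹ i q maps the nonzero quaternions onto the entire unit sphere of pure imaginary quaternions. -/
def qj : Quaternion ℝ := ⟨0, 0, 1, 0⟩

theorem inv_mul_mul_eq_of_mul_eq {G₀ : Type*} [GroupWithZero G₀] {a b q : G₀} (hq : q ≠ 0)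
    (h : a * q = q * b) : q⁻¹ * a * q = b := by
  rw [mul_assoc, h, inv_mul_cancel_left₀ hq]

theorem mul_add_eq_add_mul_of_sq_eq_sq {R : Type*} [Ring R] {a b : R} (h : a ^ 2 = b ^ 2) :
    a * (a + b) = (a + b) * b := by
  rw [mul_add, add_mul, ← sq, ← sq, h, add_comm]

theorem exists_inv_mul_mul_eq_of_sq_eq_sq {K : Type*} [DivisionRing K] {a b : K}
    (h : a ^ 2 = b ^ 2) (hab : a + b ≠ 0) : ∃ q : K, q ≠ 0 ∧ q⁻¹ * a * q = b :=
  ⟨a + b, hab, inv_mul_mul_eq_of_mul_eq hab (mul_add_eq_add_mul_of_sq_eq_sq h)⟩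

theorem Quaternion.sq_eq_neg_one_of_re_eq_zero {x : Quaternion ℝ} (hre : x.re = 0)
    (hx : Quaternion.normSq x = 1) : x ^ 2 = -1 := by
  rw [Quaternion.sq_eq_neg_normSq.mpr hre, hx, Quaternion.coe_one]

theorem qi_sq : qi ^ 2 = -1 :=
  Quaternion.sq_eq_neg_one_of_re_eq_zero rfl (by rw [Quaternion.normSq_def']; simp [qi])

theorem qj_ne_zero : qj ≠ 0 := by
  rw [← Quaternion.normSq_ne_zero, Quaternion.normSq_def']
  simp [qj]

theorem qi_mul_qj : qi * qj = qj * -qi := by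
  ext <;>
    simp only [Quaternion.re_mul, Quaternion.imI_mul, Quaternion.imJ_mul, Quaternion.imK_mul,
      Quaternion.re_neg, Quaternion.imI_neg, Quaternion.imJ_neg, Quaternion.imK_neg] <;>
    simp [qi, qj]

/-- every pure imaginary quaternion of norm `1` is of the form
`q⁻¹·i·q` for some nonzero quaternion `q`: the Hopf map is onto the unit sphere
of pure imaginary quaternions. -/
theorem stmt8 (x : Quaternion ℝ) (hre : x.re = 0) (hnorm : ‖x‖ = 1) :
    ∃ q : Quaternion ℝ, q ≠ 0 ∧ q⁻¹ * qi * q = x := by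
  by_cases h : qi + x = 0
  · obtain rfl : x = -qi := eq_neg_of_add_eq_zero_right h
    exact ⟨qj, qj_ne_zero, inv_mul_mul_eq_of_mul_eq qj_ne_zero qi_mul_qj⟩
  · have hx : x ^ 2 = -1 := Quaternion.sq_eq_neg_one_of_re_eq_zero hre <| by
      rw [Quaternion.normSq_eq_norm_mul_self, hnorm, mul_one]
    exact exists_inv_mul_mul_eq_of_sq_eq_sq (qi_sq.trans hx.symm) h
end

section
/- Let (a,b,c) ∈ ℂ³ with a+b+c = 0 and (a,b) ≠ (0,0), and set u = a + (2−√3)b and v = (2−√3)a + b. Then Im(conj(u)·v) = (4√3 − 6)·Im(conj(a)·b). Consequently, the Hopf Y-coordinate y = −2 Im(conj(u)·v)/(|u|²+|v|²) vanishes if and only if a and b are ℝ-linearly dependent (i.e. the triangle class is degenerate), and y < 0 if and only if Im(conj(a)·b) > 0 (i.e. the triangle class is positively oriented). -/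
lemma dep_iff (a b : ℂ) : ¬ LinearIndependent ℝ ![a, b] ↔ (star a * b).im = 0 := by
  rw [linearIndependent_fin2]
  simp only [Matrix.cons_val_one, Matrix.head_cons, Matrix.cons_val_zero, not_and, not_forall,
    not_not, not_ne_iff]
  constructor
  · intro h
    by_cases hb : b = 0
    · simp [hb]
    · obtain ⟨r, hr⟩ := h hb
      rw [← hr]
      simp [Complex.ext_iff, Complex.mul_im]
      ring
  · intro h hb
    have him : a.re * b.im - a.im * b.re = 0 := by
      simp [Complex.mul_im] at h
      linarith
    by_cases hre : b.re = 0
    · have hbim : b.im ≠ 0 := fun h2 => hb (Complex.ext hre h2)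
      have hare : a.re = 0 := by
        have h3 : a.re * b.im = 0 := by rw [hre] at him; linarith
        exact (mul_eq_zero.mp h3).resolve_right hbim
      refine ⟨a.im / b.im, ?_⟩
      apply Complex.ext
      · simp [Complex.smul_re, hre, hare]
      · simp [Complex.smul_im]; field_simp
    · refine ⟨a.re / b.re, ?_⟩
      apply Complex.ext
      · simp [Complex.smul_re]; field_simp
      · simp [Complex.smul_im]; field_simp; nlinarith

/-- for side vectors `(a,b,c)` with `a+b+c = 0`, `(a,b) ≠ (0,0)`, and
`u = a+(2−√3)b`, `v = (2−√3)a+b`, one has `Im(ūv) = (4√3−6)·Im(āb)`; hence the Hopf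
`Y`-coordinate `y = −2 Im(ūv)/(|u|²+|v|²)` vanishes iff `a, b` are `ℝ`-linearly
dependent (the class is degenerate), and `y < 0` iff `Im(āb) > 0` (the class is
positively oriented). -/

theorem stmt11 (a b c : ℂ) (hsum : a + b + c = 0) (hab : (a, b) ≠ (0, 0))
    (u v : ℂ) (hu : u = a + (2 - (Real.sqrt 3 : ℂ)) * b)
    (hv : v = (2 - (Real.sqrt 3 : ℂ)) * a + b)
    (y : ℝ) (hy : y = -2 * (star u * v).im / (Complex.normSq u + Complex.normSq v)) :
    (star u * v).im = (4 * Real.sqrt 3 - 6) * (star a * b).im ∧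
    (y = 0 ↔ ¬ LinearIndependent ℝ ![a, b]) ∧
    (y < 0 ↔ 0 < (star a * b).im) := by
  have hs3 : Real.sqrt 3 * Real.sqrt 3 = 3 := Real.mul_self_sqrt (by norm_num)
  have hslt : Real.sqrt 3 < 2 := by
    nlinarith [Real.sq_sqrt (by norm_num : (3:ℝ) ≥ 0), Real.sqrt_nonneg 3]
  have hsgt : (3:ℝ)/2 < Real.sqrt 3 := by
    nlinarith [Real.sq_sqrt (by norm_num : (3:ℝ) ≥ 0), Real.sqrt_nonneg 3]
  have hk : (0:ℝ) < 4 * Real.sqrt 3 - 6 := by linarith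
  have him : (star u * v).im = (4 * Real.sqrt 3 - 6) * (star a * b).im := by
    subst hu hv
    simp [Complex.mul_im, Complex.mul_re, Complex.add_im, Complex.add_re, Complex.sub_re,
      Complex.sub_im, Complex.ofReal_im, Complex.ofReal_re]
    ring_nf
    linear_combination (a.im * b.re - a.re * b.im) * hs3
  have huv : u ≠ 0 ∨ v ≠ 0 := by
    by_contra h
    push_neg at h
    obtain ⟨hu0, hv0⟩ := h
    have ht : ((2 - (Real.sqrt 3 : ℂ)) * (2 - (Real.sqrt 3 : ℂ)) : ℂ) ≠ 1 := by
      intro h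
      have : ((2 - Real.sqrt 3) * (2 - Real.sqrt 3) : ℝ) = 1 := by
        exact_mod_cast h
      nlinarith
    have hb0 : b = 0 := by
      have h1 : a = -((2 - (Real.sqrt 3 : ℂ)) * b) := by
        rw [hu0] at hu; linear_combination -hu
      rw [h1] at hv
      have : ((2 - (Real.sqrt 3 : ℂ)) * (2 - (Real.sqrt 3 : ℂ)) - 1) * b = 0 := by
        rw [hv0] at hv; linear_combination hv
      rcases mul_eq_zero.mp this with h2 | h2
      · exact absurd (by linear_combination h2) ht
      · exact h2
    have ha0 : a = 0 := by
      rw [hb0] at hu; rw [hu0] at hu; simpa using hu.symm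
    exact hab (by simp [ha0, hb0])
  have hD : 0 < Complex.normSq u + Complex.normSq v := by
    rcases huv with h | h
    · linarith [Complex.normSq_pos.mpr h, Complex.normSq_nonneg v]
    · linarith [Complex.normSq_pos.mpr h, Complex.normSq_nonneg u]
  refine ⟨him, ?_, ?_⟩
  · rw [dep_iff, hy, him, div_eq_zero_iff]
    constructor
    · rintro (h | h)
      · nlinarith
      · linarith
    · intro h; left; rw [h]; ring
  · rw [hy, him, div_neg_iff]
    constructor
    · rintro (⟨h1, h2⟩ | ⟨h1, h2⟩)
      · linarith
      · nlinarith
    · intro h; right; constructor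
      · nlinarith
      · exact hD
end

section
/- Let (a,b,c) ∈ ℂ³ with a+b+c = 0 and (a,b) ≠ (0,0); set u = a+(2−√3)b, v = (2−√3)a+b, N = |u|²+|v|², x = (|u|²−|v|²)/N and z = 2 Re(conj(u)·v)/N. Then: |a| = |b| if and only if x = 0; |b| = |c| if and only if x + √3·z = 0; and |a| = |c| if and only if x − √3·z = 0. Hence the three isosceles loci map onto three great circles of the unit sphere. -/
/-!
With `t = 2 - √3 = tan 15°` one has `1 - t² = 2√3 t = 4√3 - 6 =: k` and `√3 (1 + t²) = 2k`.
Writing `P = |u|² - |v|²`, `Z = 2 Re(ū v)` and using `c = -(a + b)`, this gives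
`P = k (|a|² - |b|²)`, `P + √3 Z = 2k (|c|² - |b|²)` and `P - √3 Z = 2k (|a|² - |c|²)`.
Since `t² ≠ 1` the substitution `(a, b) ↦ (u, v)` is invertible, so `N ≠ 0`, and each
isosceles condition is the vanishing of `x`, `x + √3 z` or `x - √3 z` respectively.
-/

open Complex ComplexConjugate

section Substitution

variable (a b : ℂ) (t : ℝ)

theorem normSq_add_mul_sub_normSq_mul_add :
    normSq (a + t * b) - normSq (t * a + b) = (1 - t ^ 2) * (normSq a - normSq b) := by
  simp only [normSq_apply, add_re, add_im, mul_re, mul_im, ofReal_re, ofReal_im]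
  ring

theorem re_star_add_mul_mul_mul_add :
    (star (a + t * b) * (t * a + b)).re
      = t * (normSq a + normSq b) + (1 + t ^ 2) * (a * conj b).re := by
  simp only [normSq_apply, add_re, add_im, mul_re, mul_im, ofReal_re, ofReal_im, star_def,
    conj_re, conj_im, map_add, map_mul, conj_ofReal]
  ring

variable {a b t}

theorem normSq_add_mul_add_normSq_mul_add_ne_zero (ht : 1 - t ^ 2 ≠ 0) (hab : (a, b) ≠ (0, 0)) :
    normSq (a + t * b) + normSq (t * a + b) ≠ 0 := by
  intro h
  obtain ⟨hu, hv⟩ := (add_eq_zero_iff_of_nonneg (normSq_nonneg _) (normSq_nonneg _)).mp h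
  rw [normSq_eq_zero] at hu hv
  have htC : 1 - (t : ℂ) ^ 2 ≠ 0 := mod_cast ht
  have ha : (1 - (t : ℂ) ^ 2) * a = 0 := by
    linear_combination hu - (t : ℂ) * hv
  have hb : (1 - (t : ℂ) ^ 2) * b = 0 := by
    linear_combination hv - (t : ℂ) * hu
  exact hab (Prod.ext ((mul_eq_zero.mp ha).resolve_left htC) ((mul_eq_zero.mp hb).resolve_left htC))

end Substitution

theorem norm_eq_norm_iff_mul_normSq_sub_div_eq_zero {p q : ℂ} {k N : ℝ} (hk : k ≠ 0)
    (hN : N ≠ 0) : ‖p‖ = ‖q‖ ↔ k * (normSq p - normSq q) / N = 0 := by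
  rw [div_eq_zero_iff, or_iff_left hN, mul_eq_zero, or_iff_right hk, sub_eq_zero,
    normSq_eq_norm_sq, normSq_eq_norm_sq, sq_eq_sq₀ (norm_nonneg p) (norm_nonneg q)]

theorem one_sub_two_sub_sqrt_three_sq : 1 - (2 - √3) ^ 2 = 4 * √3 - 6 := by
  linear_combination -Real.sq_sqrt (show (0 : ℝ) ≤ 3 by norm_num)

theorem four_mul_sqrt_three_sub_six_ne_zero : 4 * √3 - 6 ≠ 0 := by
  have : (3 / 2 : ℝ) < √3 := Real.lt_sqrt (by norm_num) |>.mpr (by norm_num)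
  linarith

section TanFifteen

variable (a b : ℂ)

local notation "t" => (2 - √3 : ℝ)

theorem normSq_sub_normSq_tan_fifteen :
    normSq (a + t * b) - normSq (t * a + b) = (4 * √3 - 6) * (normSq a - normSq b) := by
  rw [normSq_add_mul_sub_normSq_mul_add, one_sub_two_sub_sqrt_three_sq]

theorem normSq_sub_normSq_add_sqrt_three_mul_tan_fifteen :
    normSq (a + t * b) - normSq (t * a + b) + √3 * (2 * (star (a + t * b) * (t * a + b)).re)
      = 2 * (4 * √3 - 6) * (normSq (a + b) - normSq b) := by
  rw [normSq_add_mul_sub_normSq_mul_add, re_star_add_mul_mul_mul_add,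
    normSq_add]
  linear_combination (-3 * normSq a - normSq b + (2 * √3 - 8) * (a * conj b).re)
    * Real.sq_sqrt (show (0 : ℝ) ≤ 3 by norm_num)

theorem normSq_sub_normSq_sub_sqrt_three_mul_tan_fifteen :
    normSq (a + t * b) - normSq (t * a + b) - √3 * (2 * (star (a + t * b) * (t * a + b)).re)
      = 2 * (4 * √3 - 6) * (normSq a - normSq (a + b)) := by
  rw [normSq_add_mul_sub_normSq_mul_add, re_star_add_mul_mul_mul_add,
    normSq_add]
  linear_combination (normSq a + 3 * normSq b - (2 * √3 - 8) * (a * conj b).re)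
    * Real.sq_sqrt (show (0 : ℝ) ≤ 3 by norm_num)

end TanFifteen

/-- for side vectors `(a,b,c)` with `a+b+c = 0`, `(a,b) ≠ (0,0)`,
`u = a+(2−√3)b`, `v = (2−√3)a+b`, `N = |u|²+|v|²`, `x = (|u|²−|v|²)/N`,
`z = 2Re(ūv)/N`: `|a| = |b|` iff `x = 0`; `|b| = |c|` iff `x+√3z = 0`; and
`|a| = |c|` iff `x−√3z = 0`. Hence the three isosceles loci map onto three great
circles of the unit sphere. -/
theorem stmt14 (a b c : ℂ) (hsum : a + b + c = 0) (hab : (a, b) ≠ (0, 0))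
    (u v : ℂ) (hu : u = a + (2 - (Real.sqrt 3 : ℂ)) * b)
    (hv : v = (2 - (Real.sqrt 3 : ℂ)) * a + b)
    (N x z : ℝ) (hN : N = Complex.normSq u + Complex.normSq v)
    (hx : x = (Complex.normSq u - Complex.normSq v) / N)
    (hz : z = 2 * (star u * v).re / N) :
    (‖a‖ = ‖b‖ ↔ x = 0) ∧
    (‖b‖ = ‖c‖ ↔ x + Real.sqrt 3 * z = 0) ∧
    (‖a‖ = ‖c‖ ↔ x - Real.sqrt 3 * z = 0) := by
  have ht : (2 - (√3 : ℂ)) = ((2 - √3 : ℝ) : ℂ) := by push_cast; rfl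
  rw [ht] at hu hv
  subst hu hv
  have hc : c = -(a + b) := by linear_combination hsum
  have hk := four_mul_sqrt_three_sub_six_ne_zero
  have hN0 : N ≠ 0 := hN ▸ normSq_add_mul_add_normSq_mul_add_ne_zero
    (one_sub_two_sub_sqrt_three_sq ▸ hk) hab
  have h2k : 2 * (4 * √3 - 6) ≠ 0 := mul_ne_zero two_ne_zero hk
  rw [hc, norm_neg]
  refine ⟨?_, ?_, ?_⟩
  · rw [hx, normSq_sub_normSq_tan_fifteen,
      norm_eq_norm_iff_mul_normSq_sub_div_eq_zero hk hN0]
  · rw [hx, hz, mul_div_assoc', ← add_div,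
      normSq_sub_normSq_add_sqrt_three_mul_tan_fifteen, eq_comm,
      norm_eq_norm_iff_mul_normSq_sub_div_eq_zero h2k hN0]
  · rw [hx, hz, mul_div_assoc', ← sub_div,
      normSq_sub_normSq_sub_sqrt_three_mul_tan_fifteen,
      norm_eq_norm_iff_mul_normSq_sub_div_eq_zero h2k hN0]
end

section
/- Let (a,b,c) ∈ ℂ³ with a+b+c = 0 and (a,b) ≠ (0,0); set u = a+(2−√3)b, v = (2−√3)a+b, N = |u|²+|v|², and z = 2 Re(conj(u)·v)/N. Then Re(conj(a)·b) = 0 if and only if z = 1/2. That is, the classes that are right triangles with hypotenuse c (the side vectors a and b meeting at a right angle) map exactly onto the circle z = 1/2 on the unit sphere. -/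
/-- for side vectors `(a,b,c)` with `a+b+c = 0`, `(a,b) ≠ (0,0)`,
`u = a+(2−√3)b`, `v = (2−√3)a+b`, `N = |u|²+|v|²`, `z = 2Re(ūv)/N`:
`Re(āb) = 0` iff `z = 1/2`; i.e. the right classes with hypotenuse `c` map exactly
onto the circle `z = 1/2` on the unit sphere. -/
theorem stmt15 (a b c : ℂ) (hsum : a + b + c = 0) (hab : (a, b) ≠ (0, 0))
    (u v : ℂ) (hu : u = a + (2 - (Real.sqrt 3 : ℂ)) * b)
    (hv : v = (2 - (Real.sqrt 3 : ℂ)) * a + b)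
    (N z : ℝ) (hN : N = Complex.normSq u + Complex.normSq v)
    (hz : z = 2 * (star u * v).re / N) :
    (star a * b).re = 0 ↔ z = 1 / 2 := by
  subst hu hv hN hz
  have hs : Real.sqrt 3 ^ 2 = 3 := Real.sq_sqrt (by norm_num)
  have hs0 : (0:ℝ) ≤ Real.sqrt 3 := Real.sqrt_nonneg 3
  have hs2 : Real.sqrt 3 < 2 := by nlinarith
  have hab' : 0 < a.re^2 + a.im^2 + b.re^2 + b.im^2 := by
    by_contra h
    push_neg at h
    have h0 : a.re^2 + a.im^2 + b.re^2 + b.im^2 = 0 := le_antisymm h (by positivity)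
    apply hab
    have ha : a = 0 := by
      simp only [Complex.ext_iff, Complex.zero_re, Complex.zero_im]
      constructor <;> nlinarith [sq_nonneg a.re, sq_nonneg a.im, sq_nonneg b.re, sq_nonneg b.im]
    have hb : b = 0 := by
      simp only [Complex.ext_iff, Complex.zero_re, Complex.zero_im]
      constructor <;> nlinarith [sq_nonneg a.re, sq_nonneg a.im, sq_nonneg b.re, sq_nonneg b.im]
    simp [ha, hb]
  simp only [Complex.normSq_apply, Complex.mul_re, Complex.mul_im, Complex.star_def,
    Complex.conj_re, Complex.conj_im, Complex.add_re, Complex.add_im, Complex.sub_re,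
    Complex.sub_im, Complex.ofReal_re, Complex.ofReal_im, Complex.re_ofNat, Complex.im_ofNat, sub_zero, zero_mul, mul_zero, sub_self, add_zero, zero_add, zero_sub, neg_zero, neg_neg]
  set s := Real.sqrt 3
  set ar := a.re; set ai := a.im; set br := b.re; set bi := b.im
  have ht : (0:ℝ) < 2 - s := by linarith
  have hSR : 0 < (ar^2+ai^2+br^2+bi^2) + (ar*br+ai*bi) := by
    nlinarith [sq_nonneg (ar+br), sq_nonneg (ai+bi), hab']
  have hD : (ar + (2 - s) * br) * (ar + (2 - s) * br) + (ai + (2 - s) * bi) * (ai + (2 - s) * bi) +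
        (((2 - s) * ar + br) * ((2 - s) * ar + br) + ((2 - s) * ai + bi) * ((2 - s) * ai + bi))
      = 4*(2-s)*((ar^2+ai^2+br^2+bi^2) + (ar*br+ai*bi)) := by
    linear_combination (ar^2+ai^2+br^2+bi^2) * hs
  rw [hD, div_eq_iff (by positivity)]
  constructor
  · intro h
    have hR0 : ar*br + ai*bi = 0 := by linarith
    linear_combination (6 - 6*s + 2*s^2) * hR0
  · intro h
    have h6 : 6*(2-s)*(ar*br+ai*bi) = 0 := by
      linear_combination h - (2*(ar*br+ai*bi))*hs
    have := (mul_eq_zero.1 h6).resolve_left (by positivity)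
    linarith
end

section
/- Let (a,b,c) ∈ ℂ³ with a+b+c = 0 and (a,b) ≠ (0,0); set u = a+(2−√3)b, v = (2−√3)a+b, N = |u|²+|v|², and z = 2 Re(conj(u)·v)/N. Then Re(conj(a)·b) > 0 if and only if z > 1/2. That is, the classes whose interior angle at the vertex shared by sides a and b is obtuse map exactly onto the open spherical cap z > 1/2 (a cap of height 1/2, hence of area π on the unit sphere). -/
/-- for side vectors `(a,b,c)` with `a+b+c = 0`, `(a,b) ≠ (0,0)`,
`u = a+(2−√3)b`, `v = (2−√3)a+b`, `N = |u|²+|v|²`, `z = 2Re(ūv)/N`: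
`Re(āb) > 0` iff `z > 1/2`; i.e. the classes with obtuse angle at the vertex shared
by `a` and `b` map exactly onto the open spherical cap `z > 1/2` (of height `1/2`,
hence area `π`, on the unit sphere). -/
theorem stmt16 (a b c : ℂ) (hsum : a + b + c = 0) (hab : (a, b) ≠ (0, 0))
    (u v : ℂ) (hu : u = a + (2 - (Real.sqrt 3 : ℂ)) * b)
    (hv : v = (2 - (Real.sqrt 3 : ℂ)) * a + b)
    (N z : ℝ) (hN : N = Complex.normSq u + Complex.normSq v)
    (hz : z = 2 * (star u * v).re / N) :
    0 < (star a * b).re ↔ 1 / 2 < z := by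
  subst hu hv hN hz
  have hs2 : Real.sqrt 3 ^ 2 = 3 := Real.sq_sqrt (by norm_num)
  have hs1 : 1 < Real.sqrt 3 := by nlinarith [Real.sqrt_nonneg 3]
  have hab' : a ≠ 0 ∨ b ≠ 0 := by
    by_contra h
    push_neg at h
    exact hab (by simp [h.1, h.2])
  have hAB : 0 < Complex.normSq a + Complex.normSq b := by
    rcases hab' with h | h
    · exact add_pos_of_pos_of_nonneg (Complex.normSq_pos.2 h) (Complex.normSq_nonneg b)
    · exact add_pos_of_nonneg_of_pos (Complex.normSq_nonneg a) (Complex.normSq_pos.2 h)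
  rw [Complex.normSq_apply, Complex.normSq_apply] at hAB
  set s := Real.sqrt 3
  have hNpos : 0 < Complex.normSq (a + (2 - (s : ℂ)) * b) +
      Complex.normSq ((2 - (s : ℂ)) * a + b) := by
    simp only [Complex.normSq_apply, Complex.add_re, Complex.add_im, Complex.mul_re,
      Complex.mul_im, Complex.sub_re, Complex.sub_im, Complex.ofReal_re, Complex.ofReal_im, Complex.re_ofNat, Complex.im_ofNat]
    nlinarith [sq_nonneg (a.re + b.re), sq_nonneg (a.im + b.im), sq_nonneg (s - 1), hAB, hs2,
      mul_pos (mul_pos (sub_pos.2 hs1) (sub_pos.2 hs1)) hAB]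
  rw [lt_div_iff₀ hNpos]
  simp only [Complex.normSq_apply, Complex.star_def, Complex.mul_re, Complex.add_re,
    Complex.add_im, Complex.mul_im, Complex.sub_re, Complex.sub_im, Complex.ofReal_re,
    Complex.ofReal_im, Complex.conj_re, Complex.conj_im, Complex.re_ofNat, Complex.im_ofNat]
  have key : 4 * ((a.re + (2 - s) * b.re) * ((2 - s) * a.re + b.re) -
        -(a.im + (2 - s) * b.im) * ((2 - s) * a.im + b.im)) =
      ((a.re + (2 - s) * b.re) * (a.re + (2 - s) * b.re) +
        (a.im + (2 - s) * b.im) * (a.im + (2 - s) * b.im) +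
        (((2 - s) * a.re + b.re) * ((2 - s) * a.re + b.re) +
          ((2 - s) * a.im + b.im) * ((2 - s) * a.im + b.im))) +
      (24 - 12 * s) * (a.re * b.re + a.im * b.im) := by
    linear_combination (4 * (a.re * b.re + a.im * b.im) -
      (a.re ^ 2 + a.im ^ 2) - (b.re ^ 2 + b.im ^ 2)) * hs2
  constructor
  · intro h
    nlinarith [key, h, hs1]
  · intro h
    nlinarith [key, h, hs1]
end
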